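/- arXiv:2412.13367 — 4 statements merged into one kernel-verified Lean document; each statement's English description precedes it below -/
import Mathlib

section
/- Let ξ* be a complex balanced steady state of a polyexponential system with stoichiometric subspace S, and define L(ξ) = Σ_{i=1}^n (ξ_i - ξ*_i)^2. Then for all ξ ∈ ℝ^n, ⟨φ(ξ), ∇L(ξ)⟩ ≤ 0, where φ(ξ) = Σ_{(i,j)∈E} κ_{ij} e^{⟨ξ, y_i⟩}(y_j - y_i). Moreover, equality holds if and only if ξ - ξ* ∈ S^⊥. -/
open scoped RealInnerProductSpace

lemma exp_key_le (u v : ℝ) : Real.exp u * (v - u) ≤ Real.exp v - Real.exp u := by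
  have h1 : v - u + 1 ≤ Real.exp (v - u) := Real.add_one_le_exp (v - u)
  have h2 : Real.exp v = Real.exp (v - u) * Real.exp u := by
    rw [← Real.exp_add]; ring_nf
  nlinarith [Real.exp_pos u]

lemma exp_key_lt {u v : ℝ} (h : u ≠ v) :
    Real.exp u * (v - u) < Real.exp v - Real.exp u := by
  have h1 : v - u + 1 < Real.exp (v - u) :=
    Real.add_one_lt_exp (by intro hc; exact h (by linarith [sub_eq_zero.mp hc]))
  have h2 : Real.exp v = Real.exp (v - u) * Real.exp u := by
    rw [← Real.exp_add]; ring_nf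
  nlinarith [Real.exp_pos u]

theorem polyexp_Lyapunov {n m : ℕ}
    (y : Fin m → EuclideanSpace ℝ (Fin n))
    (E : Finset (Fin m × Fin m)) (hE : ∀ e ∈ E, e.1 ≠ e.2)
    (κ : Fin m × Fin m → ℝ) (hκ : ∀ e ∈ E, 0 < κ e)
    (S : Submodule ℝ (EuclideanSpace ℝ (Fin n)))
    (hS : S = Submodule.span ℝ {v : EuclideanSpace ℝ (Fin n) | ∃ e ∈ E, v = y e.2 - y e.1})
    (ξs : EuclideanSpace ℝ (Fin n))
    (hcb : ∀ i : Fin m,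
      ∑ e ∈ E.filter (fun e => e.1 = i), κ e * Real.exp ⟪ξs, y i⟫ =
      ∑ e ∈ E.filter (fun e => e.2 = i), κ e * Real.exp ⟪ξs, y e.1⟫)
    (ξ : EuclideanSpace ℝ (Fin n)) :
    ⟪∑ e ∈ E, (κ e * Real.exp ⟪ξ, y e.1⟫) • (y e.2 - y e.1), (2 : ℝ) • (ξ - ξs)⟫ ≤ 0 ∧
    (⟪∑ e ∈ E, (κ e * Real.exp ⟪ξ, y e.1⟫) • (y e.2 - y e.1), (2 : ℝ) • (ξ - ξs)⟫ = 0 ↔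
      ξ - ξs ∈ Sᗮ) := by
  set x : EuclideanSpace ℝ (Fin n) := ξ - ξs with hxdef
  -- exponential splitting
  have hexp : ∀ z : EuclideanSpace ℝ (Fin n),
      Real.exp ⟪ξ, z⟫ = Real.exp ⟪ξs, z⟫ * Real.exp ⟪x, z⟫ := by
    intro z
    rw [← Real.exp_add, ← inner_add_left]
    congr 2
    rw [hxdef]; abel
  set g : Fin m × Fin m → ℝ :=
    fun e => κ e * Real.exp ⟪ξ, y e.1⟫ * (⟪x, y e.2⟫ - ⟪x, y e.1⟫) with hg
  set h : Fin m × Fin m → ℝ :=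
    fun e => κ e * Real.exp ⟪ξs, y e.1⟫ * (Real.exp ⟪x, y e.2⟫ - Real.exp ⟪x, y e.1⟫) with hh
  -- rewrite the inner product
  have hin : ⟪∑ e ∈ E, (κ e * Real.exp ⟪ξ, y e.1⟫) • (y e.2 - y e.1), (2 : ℝ) • x⟫
      = 2 * ∑ e ∈ E, g e := by
    rw [sum_inner, Finset.mul_sum]
    refine Finset.sum_congr rfl fun e he => ?_
    rw [real_inner_smul_left, real_inner_smul_right, inner_sub_left,
      real_inner_comm x (y e.2), real_inner_comm x (y e.1)]
    simp only [hg]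
    ring
  -- pointwise inequality
  have hgh : ∀ e ∈ E, g e ≤ h e := by
    intro e he
    have hc : 0 < κ e * Real.exp ⟪ξs, y e.1⟫ := mul_pos (hκ e he) (Real.exp_pos _)
    have := exp_key_le ⟪x, y e.1⟫ ⟪x, y e.2⟫
    have h2 := mul_le_mul_of_nonneg_left this hc.le
    simp only [hg, hh]
    rw [hexp]
    nlinarith
  -- the balance sum is zero
  have hsum : ∑ e ∈ E, h e = 0 := by
    have hL : ∑ e ∈ E, κ e * Real.exp ⟪ξs, y e.1⟫ * Real.exp ⟪x, y e.2⟫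
        = ∑ i : Fin m, (∑ e ∈ E.filter (fun e => e.2 = i), κ e * Real.exp ⟪ξs, y e.1⟫)
            * Real.exp ⟪x, y i⟫ := by
      rw [← Finset.sum_fiberwise_of_maps_to (fun e _ => Finset.mem_univ e.2)
        (fun e => κ e * Real.exp ⟪ξs, y e.1⟫ * Real.exp ⟪x, y e.2⟫)]
      refine Finset.sum_congr rfl fun i _ => ?_
      rw [Finset.sum_mul]
      refine Finset.sum_congr rfl fun e he => ?_
      rw [(Finset.mem_filter.mp he).2]
    have hR : ∑ e ∈ E, κ e * Real.exp ⟪ξs, y e.1⟫ * Real.exp ⟪x, y e.1⟫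
        = ∑ i : Fin m, (∑ e ∈ E.filter (fun e => e.1 = i), κ e * Real.exp ⟪ξs, y i⟫)
            * Real.exp ⟪x, y i⟫ := by
      rw [← Finset.sum_fiberwise_of_maps_to (fun e _ => Finset.mem_univ e.1)
        (fun e => κ e * Real.exp ⟪ξs, y e.1⟫ * Real.exp ⟪x, y e.1⟫)]
      refine Finset.sum_congr rfl fun i _ => ?_
      rw [Finset.sum_mul]
      refine Finset.sum_congr rfl fun e he => ?_
      rw [(Finset.mem_filter.mp he).2]
    have : ∑ e ∈ E, h e = ∑ e ∈ E, κ e * Real.exp ⟪ξs, y e.1⟫ * Real.exp ⟪x, y e.2⟫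
        - ∑ e ∈ E, κ e * Real.exp ⟪ξs, y e.1⟫ * Real.exp ⟪x, y e.1⟫ := by
      rw [← Finset.sum_sub_distrib]
      refine Finset.sum_congr rfl fun e _ => by rw [hh]; ring
    rw [this, hL, hR]
    rw [sub_eq_zero]
    refine Finset.sum_congr rfl fun i _ => ?_
    rw [hcb i]
  have hT : ∑ e ∈ E, g e ≤ 0 := hsum ▸ Finset.sum_le_sum hgh
  -- orthogonality characterization
  have horth : (∀ e ∈ E, ⟪x, y e.2⟫ = ⟪x, y e.1⟫) ↔ x ∈ Sᗮ := by
    rw [hS, Submodule.mem_orthogonal]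
    constructor
    · intro hall u hu
      induction hu using Submodule.span_induction with
      | mem v hv =>
        obtain ⟨e, he, rfl⟩ := hv
        rw [inner_sub_left, real_inner_comm x (y e.2), real_inner_comm x (y e.1),
          hall e he, sub_self]
      | zero => simp
      | add a b _ _ ha hb => rw [inner_add_left, ha, hb, add_zero]
      | smul c a _ ha => rw [inner_smul_left, ha, mul_zero]
    · intro hall e he
      have := hall (y e.2 - y e.1) (Submodule.subset_span ⟨e, he, rfl⟩)
      rw [inner_sub_left, real_inner_comm x (y e.2), real_inner_comm x (y e.1),
        sub_eq_zero] at this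
      exact this
  refine ⟨by rw [hin]; linarith, ?_⟩
  rw [hin, ← horth]
  constructor
  · intro heq
    intro e he
    by_contra hne
    have hclt : g e < h e := by
      have hc : 0 < κ e * Real.exp ⟪ξs, y e.1⟫ := mul_pos (hκ e he) (Real.exp_pos _)
      have := exp_key_lt (fun hc => hne hc.symm : ⟪x, y e.1⟫ ≠ ⟪x, y e.2⟫)
      have h2 := mul_lt_mul_of_pos_left this hc
      simp only [hg, hh]
      rw [hexp]
      nlinarith
    have hstrict : ∑ e ∈ E, g e < ∑ e ∈ E, h e :=
      Finset.sum_lt_sum hgh ⟨e, he, hclt⟩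
    rw [hsum] at hstrict
    linarith
  · intro hall
    have : ∀ e ∈ E, g e = 0 := by
      intro e he
      rw [hg]
      simp [hall e he]
    rw [Finset.sum_eq_zero this, mul_zero]
end

section
/- Let ξ* be a complex balanced steady state of a polyexponential system with stoichiometric subspace S. If ζ ∈ ℝ^n satisfies ζ - ξ* ∈ S^⊥, then ζ is also a complex balanced steady state. -/
open scoped RealInnerProductSpace

theorem perp_translate_of_cb_is_cb {n m : ℕ}
    (y : Fin m → EuclideanSpace ℝ (Fin n))
    (E : Finset (Fin m × Fin m)) (hE : ∀ e ∈ E, e.1 ≠ e.2)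
    (κ : Fin m × Fin m → ℝ) (hκ : ∀ e ∈ E, 0 < κ e)
    (S : Submodule ℝ (EuclideanSpace ℝ (Fin n)))
    (hS : S = Submodule.span ℝ {v : EuclideanSpace ℝ (Fin n) | ∃ e ∈ E, v = y e.2 - y e.1})
    (ξs : EuclideanSpace ℝ (Fin n))
    (hcb : ∀ i : Fin m,
      ∑ e ∈ E.filter (fun e => e.1 = i), κ e * Real.exp ⟪ξs, y i⟫ =
      ∑ e ∈ E.filter (fun e => e.2 = i), κ e * Real.exp ⟪ξs, y e.1⟫)
    (ζ : EuclideanSpace ℝ (Fin n)) (hζ : ζ - ξs ∈ Sᗮ) :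
    (∀ i : Fin m,
      ∑ e ∈ E.filter (fun e => e.1 = i), κ e * Real.exp ⟪ζ, y i⟫ =
      ∑ e ∈ E.filter (fun e => e.2 = i), κ e * Real.exp ⟪ζ, y e.1⟫) ∧
    (∑ e ∈ E, (κ e * Real.exp ⟪ζ, y e.1⟫) • (y e.2 - y e.1)) = 0 := by
  subst hS
  have key : ∀ e ∈ E, ⟪ζ - ξs, y e.1⟫ = ⟪ζ - ξs, y e.2⟫ := by
    intro e he
    have hv : (y e.2 - y e.1) ∈
        Submodule.span ℝ {v : EuclideanSpace ℝ (Fin n) | ∃ e ∈ E, v = y e.2 - y e.1} :=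
      Submodule.subset_span ⟨e, he, rfl⟩
    have h0 : ⟪ζ - ξs, y e.2 - y e.1⟫ = 0 := by
      rw [real_inner_comm]
      exact (Submodule.mem_orthogonal _ _).mp hζ _ hv
    rw [inner_sub_right] at h0
    linarith
  have hdecomp : ∀ x : EuclideanSpace ℝ (Fin n), ⟪ζ, x⟫ = ⟪ξs, x⟫ + ⟪ζ - ξs, x⟫ := by
    intro x; rw [inner_sub_left]; ring
  have hzcb : ∀ i : Fin m,
      ∑ e ∈ E.filter (fun e => e.1 = i), κ e * Real.exp ⟪ζ, y i⟫ =
      ∑ e ∈ E.filter (fun e => e.2 = i), κ e * Real.exp ⟪ζ, y e.1⟫ := by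
    intro i
    calc ∑ e ∈ E.filter (fun e => e.1 = i), κ e * Real.exp ⟪ζ, y i⟫
        = Real.exp ⟪ζ - ξs, y i⟫ *
            ∑ e ∈ E.filter (fun e => e.1 = i), κ e * Real.exp ⟪ξs, y i⟫ := by
          rw [Finset.mul_sum]
          refine Finset.sum_congr rfl fun e he => ?_
          rw [hdecomp, Real.exp_add]; ring
      _ = Real.exp ⟪ζ - ξs, y i⟫ *
            ∑ e ∈ E.filter (fun e => e.2 = i), κ e * Real.exp ⟪ξs, y e.1⟫ := by rw [hcb]
      _ = ∑ e ∈ E.filter (fun e => e.2 = i), κ e * Real.exp ⟪ζ, y e.1⟫ := by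
          rw [Finset.mul_sum]
          refine Finset.sum_congr rfl fun e he => ?_
          obtain ⟨heE, hei⟩ := Finset.mem_filter.mp he
          rw [hdecomp, Real.exp_add, key e heE, hei]; ring
  refine ⟨hzcb, ?_⟩
  have hsplit : (∑ e ∈ E, (κ e * Real.exp ⟪ζ, y e.1⟫) • (y e.2 - y e.1)) =
      (∑ e ∈ E, (κ e * Real.exp ⟪ζ, y e.1⟫) • (y e.2))
        - (∑ e ∈ E, (κ e * Real.exp ⟪ζ, y e.1⟫) • (y e.1)) := by
    rw [← Finset.sum_sub_distrib]
    refine Finset.sum_congr rfl fun e he => ?_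
    rw [smul_sub]
  rw [hsplit, sub_eq_zero]
  rw [← Finset.sum_fiberwise_of_maps_to (s := E) (t := (Finset.univ : Finset (Fin m)))
      (g := fun e => e.2) (fun e _ => Finset.mem_univ _)
      (fun e => (κ e * Real.exp ⟪ζ, y e.1⟫) • y e.2),
    ← Finset.sum_fiberwise_of_maps_to (s := E) (t := (Finset.univ : Finset (Fin m)))
      (g := fun e => e.1) (fun e _ => Finset.mem_univ _)
      (fun e => (κ e * Real.exp ⟪ζ, y e.1⟫) • y e.1)]
  refine Finset.sum_congr rfl fun i _ => ?_
  have h2 : ∑ e ∈ E.filter (fun e => e.2 = i), (κ e * Real.exp ⟪ζ, y e.1⟫) • y e.2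
      = (∑ e ∈ E.filter (fun e => e.2 = i), κ e * Real.exp ⟪ζ, y e.1⟫) • y i := by
    rw [Finset.sum_smul]
    refine Finset.sum_congr rfl fun e he => ?_
    rw [(Finset.mem_filter.mp he).2]
  have h1 : ∑ e ∈ E.filter (fun e => e.1 = i), (κ e * Real.exp ⟪ζ, y e.1⟫) • y e.1
      = (∑ e ∈ E.filter (fun e => e.1 = i), κ e * Real.exp ⟪ζ, y i⟫) • y i := by
    rw [Finset.sum_smul]
    refine Finset.sum_congr rfl fun e he => ?_
    rw [(Finset.mem_filter.mp he).2]
  rw [h2, h1, hzcb i]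
end

section
/- Let ξ* be a complex balanced steady state of a polyexponential system with stoichiometric subspace S. Then a point ζ ∈ ℝ^n is a steady state (i.e., φ(ζ) = 0) if and only if ζ - ξ* ∈ S^⊥. -/
/-!
Write `u = ζ - ξ*` and `w e = κ e · exp ⟪ξ*, y e.1⟫`. Complex balance at `ξ*` says that the
weights `w` are balanced at every vertex, and `φ(ζ) = ∑ (w e · exp ⟪u, y e.1⟫) • (y e.2 - y e.1)`,
so it suffices to treat `ξ* = 0` with balanced positive weights. If `u ⊥ S`, the factor
`exp ⟪u, y e.1⟫` equals `exp ⟪u, y e.2⟫` and the sum telescopes by balance. Conversely, pairing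
`φ(ζ) = 0` with `u` and using balance once more gives
`∑ w e (exp b_e - exp a_e - exp a_e (b_e - a_e)) = 0` for `a_e = ⟪u, y e.1⟫`, `b_e = ⟪u, y e.2⟫`;
by strict convexity of `exp` every term is nonnegative and vanishes only when `a_e = b_e`.
-/

open scoped RealInnerProductSpace

open Finset

theorem Finset.sum_smul_fst_eq_sum_smul_snd {α R M : Type*} [Fintype α] [DecidableEq α]
    [Semiring R] [AddCommMonoid M] [Module R M] (E : Finset (α × α)) (w : α × α → R)
    (hw : ∀ i, ∑ e ∈ E with e.1 = i, w e = ∑ e ∈ E with e.2 = i, w e) (g : α → M) :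
    ∑ e ∈ E, w e • g e.1 = ∑ e ∈ E, w e • g e.2 := by
  rw [← sum_fiberwise E Prod.fst, ← sum_fiberwise E Prod.snd]
  refine sum_congr rfl fun i _ => ?_
  calc ∑ e ∈ E with e.1 = i, w e • g e.1
      = (∑ e ∈ E with e.1 = i, w e) • g i := by
        rw [sum_smul]
        exact sum_congr rfl fun e he => by rw [(mem_filter.mp he).2]
    _ = (∑ e ∈ E with e.2 = i, w e) • g i := by rw [hw]
    _ = ∑ e ∈ E with e.2 = i, w e • g e.2 := by
        rw [sum_smul]
        exact sum_congr rfl fun e he => by rw [(mem_filter.mp he).2]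

namespace Real

theorem exp_mul_sub_add_one_le_exp (a b : ℝ) : exp a * (b - a + 1) ≤ exp b := by
  calc exp a * (b - a + 1) ≤ exp a * exp (b - a) :=
        mul_le_mul_of_nonneg_left (add_one_le_exp _) (exp_pos a).le
    _ = exp b := by rw [← exp_add, add_sub_cancel]

theorem exp_mul_sub_add_one_lt_exp {a b : ℝ} (h : a ≠ b) : exp a * (b - a + 1) < exp b := by
  calc exp a * (b - a + 1) < exp a * exp (b - a) :=
        mul_lt_mul_of_pos_left (add_one_lt_exp (sub_ne_zero.mpr h.symm)) (exp_pos a)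
    _ = exp b := by rw [← exp_add, add_sub_cancel]

theorem forall_eq_of_sum_mul_exp_eq {ι : Type*} (s : Finset ι) (w a b : ι → ℝ)
    (hw : ∀ i ∈ s, 0 < w i) (hexp : ∑ i ∈ s, w i * exp (b i) = ∑ i ∈ s, w i * exp (a i))
    (hlin : ∑ i ∈ s, w i * exp (a i) * (b i - a i) = 0) : ∀ i ∈ s, a i = b i := by
  set defect : ι → ℝ := fun i => w i * (exp (b i) - exp (a i) * (b i - a i + 1))
  have hdefect_nonneg : ∀ i ∈ s, 0 ≤ defect i := fun i hi =>
    mul_nonneg (hw i hi).le (sub_nonneg.mpr (exp_mul_sub_add_one_le_exp _ _))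
  have hdefect_sum : ∑ i ∈ s, defect i = 0 := by
    have : ∑ i ∈ s, defect i = ∑ i ∈ s, w i * exp (b i) - ∑ i ∈ s, w i * exp (a i)
        - ∑ i ∈ s, w i * exp (a i) * (b i - a i) := by
      simp only [defect, ← sum_sub_distrib]
      exact sum_congr rfl fun i _ => by ring
    rw [this, hexp, hlin, sub_self, sub_zero]
  intro i hi
  by_contra hne
  have hpos : 0 < defect i :=
    mul_pos (hw i hi) (sub_pos.mpr (exp_mul_sub_add_one_lt_exp hne))
  exact hpos.ne' ((sum_eq_zero_iff_of_nonneg hdefect_nonneg).mp hdefect_sum i hi)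

end Real

theorem Submodule.mem_orthogonal_span_iff {V : Type*} [NormedAddCommGroup V]
    [InnerProductSpace ℝ V] (s : Set V) (u : V) :
    u ∈ (span ℝ s)ᗮ ↔ ∀ v ∈ s, ⟪u, v⟫ = 0 := by
  rw [← span_singleton_le_iff_mem, ← isOrtho_iff_le, isOrtho_span]
  simp

section BalancedWeights

variable {α V : Type*} [Fintype α] [DecidableEq α] [NormedAddCommGroup V] [InnerProductSpace ℝ V]
  (y : α → V) (E : Finset (α × α)) (w : α × α → ℝ)
  (hw : ∀ i, ∑ e ∈ E with e.1 = i, w e = ∑ e ∈ E with e.2 = i, w e)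
include hw

theorem sum_exp_inner_smul_eq_zero_of_inner_eq (u : V) (hu : ∀ e ∈ E, ⟪u, y e.1⟫ = ⟪u, y e.2⟫) :
    ∑ e ∈ E, (w e * Real.exp ⟪u, y e.1⟫) • (y e.2 - y e.1) = 0 := by
  have htelescope := E.sum_smul_fst_eq_sum_smul_snd w hw fun i => Real.exp ⟪u, y i⟫ • y i
  calc ∑ e ∈ E, (w e * Real.exp ⟪u, y e.1⟫) • (y e.2 - y e.1)
      = ∑ e ∈ E, (w e • Real.exp ⟪u, y e.2⟫ • y e.2 - w e • Real.exp ⟪u, y e.1⟫ • y e.1) :=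
        sum_congr rfl fun e he => by rw [smul_sub, ← hu e he, smul_smul, smul_smul]
    _ = 0 := by rw [sum_sub_distrib, htelescope, sub_self]

theorem inner_eq_of_sum_exp_inner_smul_eq_zero (hpos : ∀ e ∈ E, 0 < w e) (u : V)
    (h : ∑ e ∈ E, (w e * Real.exp ⟪u, y e.1⟫) • (y e.2 - y e.1) = 0) :
    ∀ e ∈ E, ⟪u, y e.1⟫ = ⟪u, y e.2⟫ := by
  refine Real.forall_eq_of_sum_mul_exp_eq E w (fun e => ⟪u, y e.1⟫) (fun e => ⟪u, y e.2⟫)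
    hpos ?_ ?_
  · simpa only [smul_eq_mul] using
      (E.sum_smul_fst_eq_sum_smul_snd w hw fun i => Real.exp ⟪u, y i⟫).symm
  · have := congrArg (⟪u, ·⟫) h
    simpa only [inner_sum, real_inner_smul_right, inner_sub_right, inner_zero_right] using this

theorem sum_exp_inner_smul_eq_zero_iff (hpos : ∀ e ∈ E, 0 < w e) (u : V) :
    ∑ e ∈ E, (w e * Real.exp ⟪u, y e.1⟫) • (y e.2 - y e.1) = 0 ↔
      ∀ e ∈ E, ⟪u, y e.1⟫ = ⟪u, y e.2⟫ :=
  ⟨inner_eq_of_sum_exp_inner_smul_eq_zero y E w hw hpos u,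
    sum_exp_inner_smul_eq_zero_of_inner_eq y E w hw u⟩

end BalancedWeights

theorem steady_state_iff_perp_general {n m : ℕ}
    (y : Fin m → EuclideanSpace ℝ (Fin n))
    (E : Finset (Fin m × Fin m))
    (κ : Fin m × Fin m → ℝ) (hκ : ∀ e ∈ E, 0 < κ e)
    (S : Submodule ℝ (EuclideanSpace ℝ (Fin n)))
    (hS : S = Submodule.span ℝ {v : EuclideanSpace ℝ (Fin n) | ∃ e ∈ E, v = y e.2 - y e.1})
    (ξs : EuclideanSpace ℝ (Fin n))
    (hcb : ∀ i : Fin m,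
      ∑ e ∈ E.filter (fun e => e.1 = i), κ e * Real.exp ⟪ξs, y i⟫ =
      ∑ e ∈ E.filter (fun e => e.2 = i), κ e * Real.exp ⟪ξs, y e.1⟫)
    (ζ : EuclideanSpace ℝ (Fin n)) :
    (∑ e ∈ E, (κ e * Real.exp ⟪ζ, y e.1⟫) • (y e.2 - y e.1)) = 0 ↔ ζ - ξs ∈ Sᗮ := by
  set w : Fin m × Fin m → ℝ := fun e => κ e * Real.exp ⟪ξs, y e.1⟫
  have hw : ∀ i, ∑ e ∈ E with e.1 = i, w e = ∑ e ∈ E with e.2 = i, w e := fun i => by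
    rw [← hcb i]
    refine sum_congr rfl fun e he => ?_
    obtain ⟨-, rfl⟩ := mem_filter.mp he
    rfl
  have hφ : ∑ e ∈ E, (κ e * Real.exp ⟪ζ, y e.1⟫) • (y e.2 - y e.1) =
      ∑ e ∈ E, (w e * Real.exp ⟪ζ - ξs, y e.1⟫) • (y e.2 - y e.1) :=
    sum_congr rfl fun e _ => by
      rw [mul_assoc, ← Real.exp_add, inner_sub_left, add_sub_cancel]
  have hperp : ζ - ξs ∈ Sᗮ ↔ ∀ e ∈ E, ⟪ζ - ξs, y e.1⟫ = ⟪ζ - ξs, y e.2⟫ := by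
    rw [hS, Submodule.mem_orthogonal_span_iff]
    constructor
    · intro h e he
      have h_edge := h _ ⟨e, he, rfl⟩
      rw [inner_sub_right, sub_eq_zero] at h_edge
      exact h_edge.symm
    · rintro h _ ⟨e, he, rfl⟩
      rw [inner_sub_right, h e he, sub_self]
  rw [hφ, hperp]
  exact sum_exp_inner_smul_eq_zero_iff y E w hw
    (fun e he => mul_pos (hκ e he) (Real.exp_pos _)) (ζ - ξs)

theorem steady_state_iff_perp {n m : ℕ}
    (y : Fin m → EuclideanSpace ℝ (Fin n))
    (E : Finset (Fin m × Fin m)) (hE : ∀ e ∈ E, e.1 ≠ e.2)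
    (κ : Fin m × Fin m → ℝ) (hκ : ∀ e ∈ E, 0 < κ e)
    (S : Submodule ℝ (EuclideanSpace ℝ (Fin n)))
    (hS : S = Submodule.span ℝ {v : EuclideanSpace ℝ (Fin n) | ∃ e ∈ E, v = y e.2 - y e.1})
    (ξs : EuclideanSpace ℝ (Fin n))
    (hcb : ∀ i : Fin m,
      ∑ e ∈ E.filter (fun e => e.1 = i), κ e * Real.exp ⟪ξs, y i⟫ =
      ∑ e ∈ E.filter (fun e => e.2 = i), κ e * Real.exp ⟪ξs, y e.1⟫)
    (ζ : EuclideanSpace ℝ (Fin n)) :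
    (∑ e ∈ E, (κ e * Real.exp ⟪ζ, y e.1⟫) • (y e.2 - y e.1)) = 0 ↔ ζ - ξs ∈ Sᗮ :=
  steady_state_iff_perp_general y E κ hκ S hS ξs hcb ζ
end

section
/- Let S be a linear subspace of ℝ^n, D a positive diagonal matrix, and ξ*, ξ_0 ∈ ℝ^n. Then the affine subspaces ξ* + S^⊥ and ξ_0 + DS intersect in exactly one point. -/
/-! Since `D` is positive definite, an `s ∈ S` with `D s ∈ Sᗮ`
satisfies `⟪s, D s⟫ = 0`, forcing `s = 0`. Thus `D S` meets `Sᗮ` only in `0`; as `D` is injective,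
`dim D S + dim Sᗮ = n`, so `D S` and `Sᗮ` are complements, and two affine subspaces with complementary
directions meet in exactly one point. -/

open Matrix

open scoped ComplexOrder InnerProductSpace

theorem Matrix.PosDef.inner_toEuclideanLin_pos {𝕜 n : Type*} [RCLike 𝕜] [Fintype n] [DecidableEq n]
    {A : Matrix n n 𝕜} (hA : A.PosDef) {x : EuclideanSpace 𝕜 n} (hx : x ≠ 0) :
    0 < ⟪x, A.toEuclideanLin x⟫_𝕜 := by
  rw [EuclideanSpace.inner_eq_star_dotProduct, ofLp_toLpLin, toLin'_apply, dotProduct_comm]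
  exact hA.dotProduct_mulVec_pos (by simpa using hx)

namespace Submodule

variable {𝕜 E : Type*} [RCLike 𝕜] [NormedAddCommGroup E] [InnerProductSpace 𝕜 E]
  {L : E →ₗ[𝕜] E}

theorem disjoint_map_orthogonal (hL : ∀ x, ⟪x, L x⟫_𝕜 = 0 → x = 0) (S : Submodule 𝕜 E) :
    Disjoint (S.map L) Sᗮ := by
  rw [disjoint_def]
  rintro _ ⟨s, hs, rfl⟩ hLs
  rw [hL s (inner_right_of_mem_orthogonal hs hLs), map_zero]

theorem isCompl_map_orthogonal [FiniteDimensional 𝕜 E] (hL : ∀ x, ⟪x, L x⟫_𝕜 = 0 → x = 0)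
    (S : Submodule 𝕜 E) : IsCompl (S.map L) Sᗮ := by
  have hinj : Function.Injective L :=
    (injective_iff_map_eq_zero L).mpr fun x hx => hL x (by rw [hx, inner_zero_right])
  have hrank : Module.finrank 𝕜 (S.map L) = Module.finrank 𝕜 S :=
    (LinearEquiv.finrank_eq (S.equivMapOfInjective L hinj)).symm
  refine (isCompl_iff_disjoint _ _ ?_).mpr (disjoint_map_orthogonal hL S)
  rw [hrank, finrank_add_finrank_orthogonal]

end Submodule

theorem existsUnique_vsub_mem_and_vsub_mem_of_isCompl {k V P : Type*} [Ring k] [AddCommGroup V]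
    [Module k V] [AddTorsor V P] {p q : Submodule k V} (h : IsCompl p q) (a b : P) :
    ∃! z : P, z -ᵥ a ∈ p ∧ z -ᵥ b ∈ q := by
  obtain ⟨z, hz⟩ := AffineSubspace.inter_eq_singleton_of_nonempty_of_isCompl
    (AffineSubspace.mk'_nonempty a p) (AffineSubspace.mk'_nonempty b q)
    (by rwa [AffineSubspace.direction_mk', AffineSubspace.direction_mk'])
  refine ⟨z, ?_, fun y hy => ?_⟩
  · simpa [← AffineSubspace.mem_mk'] using hz.symm.subset rfl
  · exact hz.subset (by simpa [← AffineSubspace.mem_mk'] using hy)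

theorem unique_intersection_perp_scaled_translate {n : ℕ}
    (S : Submodule ℝ (EuclideanSpace ℝ (Fin n)))
    (d : Fin n → ℝ) (hd : ∀ k, 0 < d k)
    (ξs ξ0 : EuclideanSpace ℝ (Fin n)) :
    ∃! ζ : EuclideanSpace ℝ (Fin n),
      ζ - ξs ∈ Sᗮ ∧ ∃ s ∈ S, ∀ k, ζ k - ξ0 k = d k * s k := by
  set L := toEuclideanLin (diagonal d)
  have hA : (diagonal d).PosDef := posDef_diagonal_iff.mpr hd
  have hcompl : IsCompl Sᗮ (S.map L) :=
    (S.isCompl_map_orthogonal fun x hx0 =>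
      not_not.mp fun hx => (hA.inner_toEuclideanLin_pos hx).ne' hx0).symm
  have hscaled : ∀ ζ, (∃ s ∈ S, ∀ k, ζ k - ξ0 k = d k * s k) ↔ ζ - ξ0 ∈ S.map L := by
    intro ζ
    refine exists_congr fun s => and_congr_right fun _ => ?_
    rw [eq_comm, PiLp.ext_iff]
    simp [L, ofLp_toLpLin, mulVec_diagonal]
  simpa only [hscaled, vsub_eq_sub] using existsUnique_vsub_mem_and_vsub_mem_of_isCompl hcompl ξs ξ0
end
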